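/- arXiv:2508.14436 — 3 statements merged into one kernel-verified Lean document; each statement's English description precedes it below -/
import Mathlib

section
/- Let X be a Banach space and T : X → X a linear operator. Suppose there exist constants λ₁, λ₂ ∈ [0,1) such that ‖Tx − x‖ ≤ λ₁‖x‖ + λ₂‖Tx‖ for all x ∈ X. Then T is bijective with bounded inverse, and for all x ∈ X, ((1 − λ₂)/(1 + λ₁))‖x‖ ≤ ‖T⁻¹x‖ ≤ ((1 + λ₂)/(1 − λ₁))‖x‖. -/
/-!
The Barnsley condition `‖f x - x‖ ≤ λ₁‖x‖ + λ₂‖f x‖` gives, by the triangle inequality,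
`(1 - λ₂)‖f x‖ ≤ (1 + λ₁)‖x‖` and `(1 - λ₁)‖x‖ ≤ (1 + λ₂)‖f x‖`. It is inherited by every
convex combination `Aₜ = (1 - t) id + t T`, `t ∈ [0, 1]`, so all `Aₜ` are bounded below by the
same constant `(1 - λ₁)/(1 + λ₂)`. An operator within distance `c` of an invertible operator that
is bounded below by `c` is invertible, so invertibility propagates along `[0, 1]` from `A₀ = id`
to `A₁ = T`. The two estimates at `x = T⁻¹ y` are the bounds on `T⁻¹`.
-/

open Set

def BarnsleyCondition {X : Type*} [SeminormedAddCommGroup X] (l1 l2 : ℝ) (f : X → X) : Prop :=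
  ∀ x, ‖f x - x‖ ≤ l1 * ‖x‖ + l2 * ‖f x‖

namespace BarnsleyCondition

variable {X : Type*} [SeminormedAddCommGroup X] {l1 l2 : ℝ} {f : X → X}

theorem one_sub_mul_norm_apply_le (hf : BarnsleyCondition l1 l2 f) (x : X) :
    (1 - l2) * ‖f x‖ ≤ (1 + l1) * ‖x‖ := by
  have := norm_le_norm_add_norm_sub' (f x) x
  linarith [hf x]

theorem one_sub_mul_norm_le (hf : BarnsleyCondition l1 l2 f) (x : X) :
    (1 - l1) * ‖x‖ ≤ (1 + l2) * ‖f x‖ := by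
  have := norm_le_norm_add_norm_sub (f x) x
  linarith [hf x]

theorem add_smul_sub_self [NormedSpace ℝ X] (hf : BarnsleyCondition l1 l2 f) (hl2 : 0 ≤ l2)
    (hl2' : l2 ≤ 1) {t : ℝ} (ht : t ∈ Icc 0 1) :
    BarnsleyCondition l1 l2 fun x ↦ x + t • (f x - x) := by
  intro x
  obtain ⟨ht0, ht1⟩ := ht
  have hfx : f x = (x + t • (f x - x)) + (1 - t) • (f x - x) := by module
  have hfx_le : ‖f x‖ ≤ ‖x + t • (f x - x)‖ + (1 - t) * ‖f x - x‖ := by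
    calc ‖f x‖ ≤ _ := hfx ▸ norm_add_le _ _
      _ = _ := by rw [norm_smul, Real.norm_of_nonneg (by linarith)]
  rw [add_sub_cancel_left, norm_smul, Real.norm_of_nonneg ht0]
  -- `hf x` and `hfx_le` give `(1 - l2 (1 - t)) ‖f x - x‖ ≤ l1 ‖x‖ + l2 ‖x + t • (f x - x)‖`,
  -- and `t ≤ 1 - l2 (1 - t)`
  nlinarith [hf x, norm_nonneg (f x - x), mul_nonneg (sub_nonneg.2 ht1) (sub_nonneg.2 hl2')]

end BarnsleyCondition

namespace ContinuousLinearMap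

variable {𝕜 E : Type*} [NontriviallyNormedField 𝕜] [NormedAddCommGroup E] [NormedSpace 𝕜 E]
  [CompleteSpace E]

theorem isUnit_of_norm_sub_lt {A B : E →L[𝕜] E} {c : ℝ} (hA : IsUnit A)
    (hbelow : ∀ x, c * ‖x‖ ≤ ‖A x‖) (hAB : ‖B - A‖ < c) : IsUnit B := by
  obtain ⟨u, rfl⟩ := hA
  have hc : 0 < c := (norm_nonneg _).trans_lt hAB
  have hinv : ‖(↑u⁻¹ : E →L[𝕜] E)‖ ≤ c⁻¹ := by
    refine opNorm_le_bound _ (inv_nonneg.2 hc.le) fun y ↦ ?_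
    rw [inv_mul_eq_div, le_div_iff₀ hc, mul_comm]
    have := hbelow ((↑u⁻¹ : E →L[𝕜] E) y)
    rwa [← mul_apply_eq_comp, Units.mul_inv, one_apply_eq_self] at this
  have hsmall : ‖(↑u⁻¹ : E →L[𝕜] E) * (↑u - B)‖ < 1 :=
    calc _ ≤ c⁻¹ * ‖B - ↑u‖ := by
          rw [norm_sub_rev]; exact (norm_mul_le _ _).trans (by gcongr)
      _ < c⁻¹ * c := by gcongr
      _ = 1 := inv_mul_cancel₀ hc.ne'
  have : B = ↑u * (1 - (↑u⁻¹ : E →L[𝕜] E) * (↑u - B)) := by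
    rw [mul_sub, ← mul_assoc, Units.mul_inv, one_mul, mul_one, sub_sub_cancel]
  exact this ▸ u.isUnit.mul (isUnit_one_sub_of_norm_lt_one hsmall)

theorem isUnit_of_isPreconnected {α : Type*} [TopologicalSpace α] {K : Set α}
    {A : α → E →L[𝕜] E} {c : ℝ} (hK : IsPreconnected K) (hA : ContinuousOn A K) (hc : 0 < c)
    (hbelow : ∀ t ∈ K, ∀ x, c * ‖x‖ ≤ ‖A t x‖) {s t : α} (hs : s ∈ K) (ht : t ∈ K)
    (hunit : IsUnit (A s)) : IsUnit (A t) := by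
  refine hK.induction₂' (fun s t ↦ IsUnit (A s) → IsUnit (A t)) (fun p hp ↦ ?_)
    (fun _ _ _ _ _ _ h₁ h₂ ↦ h₂ ∘ h₁) hs ht hunit
  filter_upwards [(hA p hp).eventually (Metric.ball_mem_nhds (A p) hc), self_mem_nhdsWithin]
    with q hq hqK
  rw [dist_eq_norm] at hq
  exact ⟨fun h ↦ isUnit_of_norm_sub_lt h (hbelow p hp) hq,
    fun h ↦ isUnit_of_norm_sub_lt h (hbelow q hqK) (norm_sub_rev (A p) (A q) ▸ hq)⟩

end ContinuousLinearMap

theorem barnsley_lemma_isomorphism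
    {X : Type*} [NormedAddCommGroup X] [NormedSpace ℝ X] [CompleteSpace X]
    (T : X →ₗ[ℝ] X) (l1 l2 : ℝ)
    (hl1 : 0 ≤ l1) (hl1' : l1 < 1) (hl2 : 0 ≤ l2) (hl2' : l2 < 1)
    (h : ∀ x : X, ‖T x - x‖ ≤ l1 * ‖x‖ + l2 * ‖T x‖) :
    Function.Bijective T ∧
      ∃ S : X →L[ℝ] X, (∀ x : X, T (S x) = x) ∧ (∀ x : X, S (T x) = x) ∧
        ∀ x : X, (1 - l2) / (1 + l1) * ‖x‖ ≤ ‖S x‖ ∧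
          ‖S x‖ ≤ (1 + l2) / (1 - l1) * ‖x‖ := by
  have hT : BarnsleyCondition l1 l2 T := h
  let T' : X →L[ℝ] X := T.mkContinuous ((1 + l1) / (1 - l2)) fun x ↦ by
    rw [div_mul_eq_mul_div, le_div_iff₀ (by linarith), mul_comm]
    exact hT.one_sub_mul_norm_apply_le x
  let A : ℝ → X →L[ℝ] X := fun t ↦ 1 + t • (T' - 1)
  have hbelow : ∀ t ∈ Icc (0 : ℝ) 1, ∀ x, (1 - l1) / (1 + l2) * ‖x‖ ≤ ‖A t x‖ := by
    intro t ht x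
    rw [div_mul_eq_mul_div, div_le_iff₀ (by linarith), mul_comm ‖A t x‖]
    exact (hT.add_smul_sub_self hl2 hl2'.le ht).one_sub_mul_norm_le x
  have hunit : IsUnit (A 1) :=
    ContinuousLinearMap.isUnit_of_isPreconnected isPreconnected_Icc (by fun_prop)
      (div_pos (by linarith) (by linarith)) hbelow (left_mem_Icc.2 zero_le_one)
      (right_mem_Icc.2 zero_le_one) (by simp [A])
  obtain ⟨u, hu⟩ := hunit
  let e := ContinuousLinearEquiv.unitsEquiv ℝ X u
  have he : ⇑e = ⇑T := funext fun x ↦ by simp [e, hu, A, T']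
  have hTS : ∀ x, T (e.symm x) = x := fun x ↦ he ▸ e.apply_symm_apply x
  refine ⟨he ▸ e.bijective, e.symm, hTS, fun x ↦ he ▸ e.symm_apply_apply x, fun x ↦ ⟨?_, ?_⟩⟩
  · rw [div_mul_eq_mul_div, div_le_iff₀ (by linarith), mul_comm ‖_‖]
    simpa only [hTS, ContinuousLinearEquiv.coe_coe] using
      hT.one_sub_mul_norm_apply_le (e.symm x)
  · rw [div_mul_eq_mul_div, le_div_iff₀ (by linarith), mul_comm]
    simpa only [hTS, ContinuousLinearEquiv.coe_coe] using hT.one_sub_mul_norm_le (e.symm x)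
end

section
/- Let X be a Banach space, T : X → X a bounded linear operator, and F : X → X a bounded linear operator satisfying ‖F f − f‖ ≤ c ‖F f − T f‖ for all f ∈ X, where c ≥ 0 with c‖T‖ < 1 and c < 1. Then F is a topological automorphism of X, and ‖F⁻¹‖ ≤ (1 + c)/(1 − c‖T‖). -/
/-!
Writing `‖F f - f‖ ≤ c ‖F f - T f‖ ≤ c ‖T‖ ‖f‖ + c ‖F f‖` puts `F` in the setting of the
Casazza–Christensen perturbation theorem: `‖A x - x‖ ≤ c₁ ‖x‖ + c₂ ‖A x‖` with `c₁, c₂ < 1`.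
Such an `A` is bounded below, `(1 - c₁) ‖x‖ ≤ (1 + c₂) ‖A x‖`, and so is every operator
`1 + s • (A - 1)`, `s ∈ [0, 1]`, with a constant independent of `s`. Lower bounds on units are
upper bounds on their inverses, and a uniform bound on the inverses makes invertibility an
open and closed condition along the segment (method of continuity). Since the segment starts
at `1`, its endpoint `A` is invertible.
-/

open Set Filter Topology

section NormedRing

variable {R : Type*} [NormedRing R] [HasSummableGeomSeries R]

theorem Units.isUnit_of_norm_sub_mul_norm_inv_lt (u : Rˣ) {a : R}
    (h : ‖a - u‖ * ‖(↑u⁻¹ : R)‖ < 1) : IsUnit a := by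
  nontriviality R
  have hnear : ‖a - u‖ < ‖(↑u⁻¹ : R)‖⁻¹ := by
    rwa [← one_div, lt_div_iff₀ (Units.norm_pos u⁻¹)]
  simpa only [Units.val_ofNearby] using (u.ofNearby a hnear).isUnit

theorem IsPreconnected.isUnit_iff_of_norm_inv_le {α : Type*} [TopologicalSpace α] {S : Set α}
    (hS : IsPreconnected S) {p : α → R} (hp : ContinuousOn p S) {M : ℝ}
    (hM : ∀ s ∈ S, ∀ u : Rˣ, (u : R) = p s → ‖(↑u⁻¹ : R)‖ ≤ M) {a b : α}
    (ha : a ∈ S) (hb : b ∈ S) : IsUnit (p a) ↔ IsUnit (p b) := by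
  have isUnit_of_near : ∀ s ∈ S, ∀ t, ‖p t - p s‖ * M < 1 → IsUnit (p s) → IsUnit (p t) := by
    rintro s hs t hst ⟨u, hu⟩
    refine u.isUnit_of_norm_sub_mul_norm_inv_lt (lt_of_le_of_lt ?_ hst)
    rw [hu]
    exact mul_le_mul_of_nonneg_left (hM s hs u hu) (norm_nonneg _)
  refine hS.induction₂ (fun x y ↦ IsUnit (p x) ↔ IsUnit (p y)) (fun x hx ↦ ?_)
    (fun _ _ _ _ _ _ ↦ Iff.trans) (fun _ _ _ _ ↦ Iff.symm) ha hb
  have hlim : Tendsto (fun y ↦ ‖p y - p x‖ * M) (𝓝[S] x) (𝓝 0) := by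
    simpa using (((hp x hx).sub (continuousWithinAt_const (b := p x))).norm.mul_const M).tendsto
  filter_upwards [hlim.eventually_lt_const zero_lt_one, self_mem_nhdsWithin] with y hy hyS
  exact ⟨isUnit_of_near x hx y hy, isUnit_of_near y hyS x (by rwa [norm_sub_rev])⟩

end NormedRing

theorem ContinuousLinearMap.norm_units_inv_le {𝕜 E : Type*} [NontriviallyNormedField 𝕜]
    [NormedAddCommGroup E] [NormedSpace 𝕜 E] {u : (E →L[𝕜] E)ˣ} {K : ℝ} (hK : 0 ≤ K)
    (h : ∀ x, ‖x‖ ≤ K * ‖(u : E →L[𝕜] E) x‖) : ‖(↑u⁻¹ : E →L[𝕜] E)‖ ≤ K := by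
  refine opNorm_le_bound _ hK fun y ↦ ?_
  have hy : (u : E →L[𝕜] E) ((↑u⁻¹ : E →L[𝕜] E) y) = y := by
    rw [← mul_apply_eq_comp, u.mul_inv, one_apply_eq_self]
  simpa only [hy] using h ((↑u⁻¹ : E →L[𝕜] E) y)

section Perturbation

variable {X : Type*} [NormedAddCommGroup X] [NormedSpace ℝ X] {c₁ c₂ : ℝ}

theorem mul_norm_le_mul_norm_add_smul_sub {x y : X} (hc₂₀ : 0 ≤ c₂) (hc₂₁ : c₂ ≤ 1)
    (hxy : ‖y - x‖ ≤ c₁ * ‖x‖ + c₂ * ‖y‖) {s : ℝ} (hs₀ : 0 ≤ s) (hs₁ : s ≤ 1) :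
    ((1 - s) * (1 - c₂) + s * (1 - c₁)) * ‖x‖ ≤ (1 + c₂) * ‖x + s • (y - x)‖ := by
  set z := x + s • (y - x)
  have hx : ‖x‖ ≤ ‖z‖ + s * ‖y - x‖ := by
    calc ‖x‖ = ‖z - s • (y - x)‖ := by rw [add_sub_cancel_right]
      _ ≤ ‖z‖ + ‖s • (y - x)‖ := norm_sub_le _ _
      _ = ‖z‖ + s * ‖y - x‖ := by rw [norm_smul, Real.norm_of_nonneg hs₀]
  have hy : ‖y‖ ≤ ‖z‖ + (1 - s) * ‖y - x‖ := by
    calc ‖y‖ = ‖z + (1 - s) • (y - x)‖ := by congr 1; module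
      _ ≤ ‖z‖ + ‖(1 - s) • (y - x)‖ := norm_add_le _ _
      _ = ‖z‖ + (1 - s) * ‖y - x‖ := by rw [norm_smul, Real.norm_of_nonneg (by linarith)]
  have hyx : (1 - c₂ * (1 - s)) * ‖y - x‖ ≤ c₁ * ‖x‖ + c₂ * ‖z‖ := by
    nlinarith [mul_le_mul_of_nonneg_left hy hc₂₀]
  have hz : 0 ≤ ‖z‖ := norm_nonneg _
  -- scale `hx` by `1 - c₂ (1 - s)` and bound the resulting `‖y - x‖` term by `hyx`
  nlinarith [mul_le_mul_of_nonneg_left hyx hs₀, mul_nonneg (mul_nonneg hc₂₀ (sub_nonneg.2 hs₁)) hz,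
    mul_le_mul_of_nonneg_right hx (by nlinarith : 0 ≤ 1 - c₂ * (1 - s))]

theorem ContinuousLinearMap.exists_units_of_norm_sub_le [CompleteSpace X] (A : X →L[ℝ] X)
    (hc₁ : c₁ < 1) (hc₂₀ : 0 ≤ c₂) (hc₂ : c₂ < 1)
    (hA : ∀ x, ‖A x - x‖ ≤ c₁ * ‖x‖ + c₂ * ‖A x‖) :
    ∃ u : (X →L[ℝ] X)ˣ, (u : X →L[ℝ] X) = A ∧ ‖(↑u⁻¹ : X →L[ℝ] X)‖ ≤ (1 + c₂) / (1 - c₁) := by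
  set p : ℝ → X →L[ℝ] X := fun s ↦ 1 + s • (A - 1)
  set δ := min (1 - c₁) (1 - c₂)
  have hδ : 0 < δ := lt_min (by linarith) (by linarith)
  have hp_bdd : ∀ s ∈ Icc (0 : ℝ) 1, ∀ x, ‖x‖ ≤ (1 + c₂) / δ * ‖p s x‖ := by
    rintro s ⟨hs₀, hs₁⟩ x
    have hδs : δ ≤ (1 - s) * (1 - c₂) + s * (1 - c₁) := by
      nlinarith [min_le_left (1 - c₁) (1 - c₂), min_le_right (1 - c₁) (1 - c₂)]
    have key := mul_norm_le_mul_norm_add_smul_sub hc₂₀ hc₂.le (hA x) hs₀ hs₁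
    rw [div_mul_eq_mul_div, le_div_iff₀' hδ]
    simpa [p] using (mul_le_mul_of_nonneg_right hδs (norm_nonneg x)).trans key
  have hp_cont : Continuous p := by fun_prop
  have hunit : IsUnit (p 1) := by
    refine (isPreconnected_Icc.isUnit_iff_of_norm_inv_le hp_cont.continuousOn
      (fun s hs u hu ↦ norm_units_inv_le (by positivity) (hu ▸ hp_bdd s hs))
      (left_mem_Icc.2 zero_le_one) (right_mem_Icc.2 zero_le_one)).1 ?_
    simp [p]
  obtain ⟨u, hu⟩ := hunit
  have hpA : p 1 = A := by simp [p]
  refine ⟨u, hu.trans hpA, norm_units_inv_le (div_nonneg (by linarith) (by linarith)) fun x ↦ ?_⟩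
  have key := mul_norm_le_mul_norm_add_smul_sub hc₂₀ hc₂.le (hA x) zero_le_one le_rfl
  rw [hu, hpA, div_mul_eq_mul_div, le_div_iff₀' (by linarith)]
  simpa using key

end Perturbation

theorem fractal_operator_topological_automorphism
    {X : Type*} [NormedAddCommGroup X] [NormedSpace ℝ X] [CompleteSpace X]
    (T F : X →L[ℝ] X) (c : ℝ)
    (hc0 : 0 ≤ c) (hc1 : c < 1) (hcT : c * ‖T‖ < 1)
    (h : ∀ f : X, ‖F f - f‖ ≤ c * ‖F f - T f‖) :
    ∃ G : X →L[ℝ] X, (∀ x, G (F x) = x) ∧ (∀ x, F (G x) = x) ∧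
      ‖G‖ ≤ (1 + c) / (1 - c * ‖T‖) := by
  have hF : ∀ f, ‖F f - f‖ ≤ c * ‖T‖ * ‖f‖ + c * ‖F f‖ := fun f ↦
    calc ‖F f - f‖ ≤ c * ‖F f - T f‖ := h f
      _ ≤ c * (‖F f‖ + ‖T‖ * ‖f‖) :=
        mul_le_mul_of_nonneg_left ((norm_sub_le _ _).trans (by gcongr; exact T.le_opNorm f)) hc0
      _ = c * ‖T‖ * ‖f‖ + c * ‖F f‖ := by ring
  obtain ⟨u, rfl, hu⟩ := F.exists_units_of_norm_sub_le hcT hc0 hc1 hF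
  refine ⟨↑u⁻¹, fun x ↦ ?_, fun x ↦ ?_, hu⟩
  · rw [← mul_apply_eq_comp, u.inv_mul, one_apply_eq_self]
  · rw [← mul_apply_eq_comp, u.mul_inv, one_apply_eq_self]
end

section
/- Let V₀ = {p₁, p₂, p₃} be the vertices of an equilateral triangle, V_n the n-th level vertex set of the Sierpiński gasket, and for a function f : V_n → ℝ define the graph energy ℰ_n(f) = (5/3)^n Σ_{x∼_n y} (f(x) − f(y))². Then the sequence (ℰ_n(f))_n obtained by restricting a fixed function f on V_* = ⋃ V_m is non-decreasing in n: ℰ_{n−1}(f|_{V_{n−1}}) ≤ ℰ_n(f|_{V_n}) for all n ≥ 1. -/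
/-- The contraction maps of the Sierpiński gasket IFS. -/
noncomputable def gasketMap (p : Fin 3 → EuclideanSpace ℝ (Fin 2)) (i : Fin 3)
    (x : EuclideanSpace ℝ (Fin 2)) : EuclideanSpace ℝ (Fin 2) :=
  (1/2 : ℝ) • (x + p i)

/-- The composition `L_{w₁} ∘ L_{w₂} ∘ ⋯ ∘ L_{wₙ}` associated with a word `w`. -/
noncomputable def gasketWordMap (p : Fin 3 → EuclideanSpace ℝ (Fin 2)) {n : ℕ}
    (w : Fin n → Fin 3) : EuclideanSpace ℝ (Fin 2) → EuclideanSpace ℝ (Fin 2) :=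
  (List.ofFn w).foldr (fun i g => gasketMap p i ∘ g) id

/-- The level-`n` graph energy `ℰ_n(f) = (5/3)^n ∑_{x ∼ₙ y} (f x - f y)²`, where
`x ∼ₙ y` iff `x = L_w(pᵢ)`, `y = L_w(p_j)` for some word `w` of length `n`
(each edge is counted with the same multiplicity at every level). -/
noncomputable def graphEnergy (p : Fin 3 → EuclideanSpace ℝ (Fin 2))
    (f : EuclideanSpace ℝ (Fin 2) → ℝ) (n : ℕ) : ℝ :=
  (5/3 : ℝ)^n * ∑ w : Fin n → Fin 3, ∑ i : Fin 3, ∑ j : Fin 3,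
    (f (gasketWordMap p w (p i)) - f (gasketWordMap p w (p j)))^2

/-!
Let `E₀` be the energy of a triangle with corner values `a, b, c`, and `E₁` the energy of its
three half-size subtriangles, whose new vertices (the edge midpoints) carry values `u, v, w`.
As a function of `(u, v, w)`, `E₁` is minimised by the harmonic extension
`u = (2a + 2b + c)/5, …`, where it equals `(3/5) E₀`. Hence `E₀ ≤ (5/3) E₁` for every choice of
midpoint values, and summing this over the level-`n` cells `L_w(V₀)` gives `ℰ_n(f) ≤ ℰ_{n+1}(f)`.
-/

open Finset

def cellEnergy (x : Fin 3 → ℝ) : ℝ :=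
  ∑ i, ∑ j, (x i - x j) ^ 2

/-- With `(a, b, c) = (x 0, x 1, x 2)`, `ξ = u - (2a+2b+c)/5`, `η = v - (2a+b+2c)/5`,
`ζ = w - (a+2b+2c)/5`, and `E₀`, `E₁` half the left side and half the bracket on the right,
`E₁ - (3/5) E₀ = 2(ξ² + η² + ζ²) + (ξ - η)² + (ξ - ζ)² + (η - ζ)²`. -/
theorem cellEnergy_le_five_thirds_mul_subdivision (x : Fin 3 → ℝ) (u v w : ℝ) :
    cellEnergy x ≤ 5 / 3 *
      (cellEnergy ![x 0, u, v] + cellEnergy ![u, x 1, w] + cellEnergy ![v, w, x 2]) := by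
  simp only [cellEnergy, Fin.sum_univ_three, Matrix.cons_val]
  nlinarith [sq_nonneg (5 * u - 2 * x 0 - 2 * x 1 - x 2),
    sq_nonneg (5 * v - 2 * x 0 - x 1 - 2 * x 2), sq_nonneg (5 * w - x 0 - 2 * x 1 - 2 * x 2),
    sq_nonneg (5 * u - 5 * v - x 1 + x 2), sq_nonneg (5 * u - 5 * w - x 0 + x 2),
    sq_nonneg (5 * v - 5 * w - x 0 + x 1)]

section Gasket

variable (p : Fin 3 → EuclideanSpace ℝ (Fin 2))

theorem gasketMap_apply_self (k : Fin 3) : gasketMap p k (p k) = p k := by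
  unfold gasketMap
  module

theorem gasketMap_apply_comm (i j : Fin 3) : gasketMap p i (p j) = gasketMap p j (p i) := by
  unfold gasketMap
  rw [add_comm]

theorem List.foldr_comp_concat {ι α : Type*} (F : ι → α → α) (l : List ι) (k : ι) :
    (l.concat k).foldr (fun i g => F i ∘ g) id = l.foldr (fun i g => F i ∘ g) id ∘ F k := by
  induction l with
  | nil => rfl
  | cons a l ih =>
    simp only [List.concat_eq_append, List.cons_append, List.foldr_cons] at ih ⊢
    rw [ih]
    rfl

theorem gasketWordMap_snoc {n : ℕ} (w : Fin n → Fin 3) (k : Fin 3) :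
    gasketWordMap p (Fin.snoc w k) = gasketWordMap p w ∘ gasketMap p k := by
  simp only [gasketWordMap, List.ofFn_succ', Fin.snoc_castSucc, Fin.snoc_last]
  exact List.foldr_comp_concat _ _ _

theorem cellEnergy_le_five_thirds_mul_sum_gasketMap (g : EuclideanSpace ℝ (Fin 2) → ℝ) :
    cellEnergy (g ∘ p) ≤ 5 / 3 * ∑ k, cellEnergy (g ∘ gasketMap p k ∘ p) := by
  have cell (k : Fin 3) (a b c : EuclideanSpace ℝ (Fin 2))
      (h : gasketMap p k (p 0) = a ∧ gasketMap p k (p 1) = b ∧ gasketMap p k (p 2) = c) :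
      g ∘ gasketMap p k ∘ p = ![g a, g b, g c] := by
    ext i; fin_cases i <;> simp [h]
  rw [Fin.sum_univ_three,
    cell 0 _ _ _ ⟨gasketMap_apply_self p 0, rfl, rfl⟩,
    cell 1 _ _ _ ⟨gasketMap_apply_comm p 1 0, gasketMap_apply_self p 1, rfl⟩,
    cell 2 _ _ _ ⟨gasketMap_apply_comm p 2 0, gasketMap_apply_comm p 2 1, gasketMap_apply_self p 2⟩]
  exact cellEnergy_le_five_thirds_mul_subdivision (g ∘ p) _ _ _

end Gasket

theorem Fin.sum_pi_succ_eq_sum_snoc {α M : Type*} [Fintype α] [AddCommMonoid M] {n : ℕ}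
    (F : (Fin (n + 1) → α) → M) :
    ∑ w, F w = ∑ w : Fin n → α, ∑ k, F (Fin.snoc w k) := by
  rw [← (Fin.snocEquiv fun _ => α).sum_comp, Fintype.sum_prod_type, Finset.sum_comm]
  rfl

theorem graphEnergy_le_graphEnergy_succ (p : Fin 3 → EuclideanSpace ℝ (Fin 2))
    (f : EuclideanSpace ℝ (Fin 2) → ℝ) (n : ℕ) :
    graphEnergy p f n ≤ graphEnergy p f (n + 1) := by
  have energy_eq (m : ℕ) : graphEnergy p f m
      = (5 / 3) ^ m * ∑ w : Fin m → Fin 3, cellEnergy ((f ∘ gasketWordMap p w) ∘ p) := by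
    simp only [graphEnergy, cellEnergy, Function.comp_apply]
  calc graphEnergy p f n
      ≤ (5 / 3) ^ n * ∑ w : Fin n → Fin 3,
          5 / 3 * ∑ k, cellEnergy ((f ∘ gasketWordMap p w) ∘ gasketMap p k ∘ p) := by
        rw [energy_eq]
        exact mul_le_mul_of_nonneg_left
          (sum_le_sum fun w _ => cellEnergy_le_five_thirds_mul_sum_gasketMap p _) (by positivity)
    _ = graphEnergy p f (n + 1) := by
        simp only [energy_eq, Fin.sum_pi_succ_eq_sum_snoc, gasketWordMap_snoc, ← mul_sum, pow_succ,
          mul_assoc, Function.comp_assoc]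

theorem graphEnergy_monotone_general
    (p : Fin 3 → EuclideanSpace ℝ (Fin 2))
    (f : EuclideanSpace ℝ (Fin 2) → ℝ) :
    ∀ n : ℕ, 1 ≤ n → graphEnergy p f (n - 1) ≤ graphEnergy p f n := by
  intro n hn
  obtain ⟨m, rfl⟩ := Nat.exists_eq_add_of_le' hn
  exact graphEnergy_le_graphEnergy_succ p f m

theorem graphEnergy_monotone
    (p : Fin 3 → EuclideanSpace ℝ (Fin 2))
    (hne : p 0 ≠ p 1)
    (heq1 : dist (p 0) (p 1) = dist (p 1) (p 2))
    (heq2 : dist (p 1) (p 2) = dist (p 0) (p 2))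
    (f : EuclideanSpace ℝ (Fin 2) → ℝ) :
    ∀ n : ℕ, 1 ≤ n → graphEnergy p f (n - 1) ≤ graphEnergy p f n :=
  graphEnergy_monotone_general p f
end
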